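/- Let Q be a quiver and let (φ_a)_{a∈Q₁}, (ψ_a)_{a∈Q₁} be families of nonzero scalars, extended multiplicatively to walks (with φ_{a^{-1}} = φ_a^{-1}). Fix a complete set S of representatives of equivalence classes of simple cycles in Q. Then φ_S = ψ_S for all S ∈ S if and only if φ_C = ψ_C for all cycles C in Q. -/

import Mathlib

/-!
A cycle whose sources are not pairwise distinct passes twice through some vertex, so it splits
into two shorter cycles whose values multiply to its value. By induction on the length, the value
of every cycle is therefore a product of values of simple cycles. Equivalent simple cycles have
equal or inverse values: a rotation only permutes the letters, and inverting a walk inverts its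
value.
-/

/-- A letter of the double quiver: an arrow together with an orientation
(`true` = the arrow itself, `false` = its formal inverse). -/
abbrev Letter (A : Type) := A × Bool

variable {V A : Type} (s t : A → V)

/-- Source of a letter of the double quiver. -/
def lsrc (l : Letter A) : V := if l.2 then s l.1 else t l.1

/-- Target of a letter of the double quiver. -/
def ltgt (l : Letter A) : V := if l.2 then t l.1 else s l.1

/-- A walk in the quiver `(V, A, s, t)`, i.e. a path in the double quiver; the list
is written in order of traversal, i.e. `[l_1, l_2, …, l_n]` for the walk `l_n ⋯ l_1`. -/
def IsWalk (w : List (Letter A)) : Prop :=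
  w.Chain' fun p q => ltgt s t p = lsrc s t q

/-- A cycle: a nonempty walk whose endpoint is its starting point. -/
def IsCycle (w : List (Letter A)) : Prop :=
  w ≠ [] ∧ IsWalk s t w ∧
    ∀ a ∈ w.head?, ∀ b ∈ w.getLast?, ltgt s t b = lsrc s t a

/-- A simple cycle: a cycle whose sources are pairwise distinct. -/
def IsSimpleCycle (w : List (Letter A)) : Prop :=
  IsCycle s t w ∧ (w.map (lsrc s t)).Nodup

/-- The inverse of a walk. -/
def winv (w : List (Letter A)) : List (Letter A) :=
  (w.map fun l => (l.1, !l.2)).reverse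

variable {k : Type} [Field k]

/-- The value `φ_w` of a family of nonzero scalars `(φ_a)_{a ∈ A}` on a walk `w`,
multiplicative on letters, with `φ_{a⁻¹} = φ_a⁻¹`. -/
def wval (φ : A → kˣ) (w : List (Letter A)) : kˣ :=
  (w.map fun l => if l.2 then φ l.1 else (φ l.1)⁻¹).prod

/-- Equivalence of simple cycles: same length and one is a cyclic rotation of the
other or of its inverse. -/
def CycEquiv (w w' : List (Letter A)) : Prop :=
  w.length = w'.length ∧ ∃ c, w.rotate c = w' ∨ w.rotate c = winv w'

theorem List.exists_eq_append_cons_append_cons_of_not_pairwise {α : Type*} {R : α → α → Prop}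
    {l : List α} (h : ¬ l.Pairwise R) :
    ∃ p a q b r, l = p ++ a :: (q ++ b :: r) ∧ ¬ R a b := by
  induction l with
  | nil => simp at h
  | cons x l ih =>
    rw [List.pairwise_cons] at h
    by_cases hx : ∀ y ∈ l, R x y
    · obtain ⟨p, a, q, b, r, rfl, hab⟩ := ih fun hl => h ⟨hx, hl⟩
      exact ⟨x :: p, a, q, b, r, rfl, hab⟩
    · obtain ⟨y, hy, hxy⟩ := not_forall₂.mp hx
      obtain ⟨q, r, rfl⟩ := List.mem_iff_append.mp hy
      exact ⟨[], x, q, y, r, rfl, hxy⟩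

theorem isWalk_iff_isChain {w : List (Letter A)} :
    IsWalk s t w ↔ w.IsChain fun p q => ltgt s t p = lsrc s t q :=
  Iff.rfl

def IsWalkFromTo : V → List (Letter A) → V → Prop
  | u, [], v => u = v
  | u, l :: w, v => lsrc s t l = u ∧ IsWalkFromTo (ltgt s t l) w v

theorem isWalkFromTo_append {u v : V} {w w' : List (Letter A)} :
    IsWalkFromTo s t u (w ++ w') v ↔ ∃ m, IsWalkFromTo s t u w m ∧ IsWalkFromTo s t m w' v := by
  induction w generalizing u with
  | nil => simp [IsWalkFromTo]
  | cons l w ih => simp [IsWalkFromTo, ih, and_assoc]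

theorem isWalkFromTo_cons_iff {u v : V} {l : Letter A} {w : List (Letter A)} :
    IsWalkFromTo s t u (l :: w) v ↔
      lsrc s t l = u ∧ IsWalk s t (l :: w) ∧
        ltgt s t ((l :: w).getLast (List.cons_ne_nil l w)) = v := by
  induction w generalizing u l with
  | nil => simp [IsWalkFromTo, isWalk_iff_isChain]
  | cons m w ih =>
    simp only [IsWalkFromTo, isWalk_iff_isChain, List.isChain_cons_cons,
      List.getLast_cons_cons] at ih ⊢
    rw [ih]
    tauto

theorem isCycle_iff {w : List (Letter A)} :
    IsCycle s t w ↔ w ≠ [] ∧ ∃ v, IsWalkFromTo s t v w v := by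
  rcases w with _ | ⟨l, w⟩
  · simp [IsCycle]
  · simp only [IsCycle, ne_eq, reduceCtorEq, not_false_eq_true, isWalkFromTo_cons_iff, true_and,
      List.head?_cons, Option.mem_def, Option.some.injEq, forall_eq',
      List.getLast?_eq_some_getLast (List.cons_ne_nil l w)]
    constructor
    · rintro ⟨hw, hcl⟩; exact ⟨_, rfl, hw, hcl⟩
    · rintro ⟨v, rfl, hw, hcl⟩; exact ⟨hw, hcl⟩

theorem IsCycle.split {p q r : List (Letter A)} {a b : Letter A}
    (h : IsCycle s t (p ++ a :: (q ++ b :: r))) (hab : lsrc s t a = lsrc s t b) :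
    IsCycle s t (a :: q) ∧ IsCycle s t (p ++ b :: r) := by
  obtain ⟨-, v, hv⟩ := (isCycle_iff s t).1 h
  simp only [isWalkFromTo_append, IsWalkFromTo] at hv
  obtain ⟨_, hp, rfl, _, hq, rfl, hr⟩ := hv
  refine ⟨(isCycle_iff s t).2 ⟨List.cons_ne_nil a q, lsrc s t a, rfl, hab ▸ hq⟩,
    (isCycle_iff s t).2 ⟨by simp, v, ?_⟩⟩
  exact (isWalkFromTo_append s t).2 ⟨_, hp, hab.symm, hr⟩

theorem IsCycle.exists_perm_append_of_not_nodup {C : List (Letter A)} (hC : IsCycle s t C)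
    (hnd : ¬(C.map (lsrc s t)).Nodup) :
    ∃ u v, IsCycle s t u ∧ IsCycle s t v ∧ C.Perm (u ++ v) := by
  rw [List.Nodup, List.pairwise_map] at hnd
  obtain ⟨p, a, q, b, r, rfl, hab⟩ := List.exists_eq_append_cons_append_cons_of_not_pairwise hnd
  obtain ⟨hq, hpr⟩ := hC.split s t (not_not.mp hab)
  refine ⟨a :: q, p ++ b :: r, hq, hpr, ?_⟩
  simpa using (List.perm_append_comm (l₁ := p) (l₂ := a :: q)).append_right (b :: r)

theorem wval_append (φ : A → kˣ) (u v : List (Letter A)) :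
    wval φ (u ++ v) = wval φ u * wval φ v := by
  simp [wval]

theorem wval_perm (φ : A → kˣ) {u v : List (Letter A)} (h : u.Perm v) : wval φ u = wval φ v :=
  (h.map _).prod_eq

theorem wval_winv (φ : A → kˣ) (w : List (Letter A)) : wval φ (winv w) = (wval φ w)⁻¹ := by
  simp [wval, winv, List.prod_inv, Function.comp_def, apply_ite, ← Bool.not_eq_true, ite_not]

theorem CycEquiv.wval_eq_wval_iff {φ ψ : A → kˣ} {w w' : List (Letter A)} (h : CycEquiv w w') :
    wval φ w = wval ψ w ↔ wval φ w' = wval ψ w' := by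
  obtain ⟨-, c, hc | hc⟩ := h
  all_goals rw [← wval_perm φ (w.rotate_perm c), ← wval_perm ψ (w.rotate_perm c), hc]
  rw [wval_winv, wval_winv, inv_inj]

theorem wval_eq_wval_of_isCycle {φ ψ : A → kˣ}
    (H : ∀ C, IsSimpleCycle s t C → wval φ C = wval ψ C) {C : List (Letter A)}
    (hC : IsCycle s t C) : wval φ C = wval ψ C := by
  by_cases hnd : (C.map (lsrc s t)).Nodup
  · exact H C ⟨hC, hnd⟩
  obtain ⟨u, v, hu, hv, hperm⟩ := hC.exists_perm_append_of_not_nodup s t hnd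
  rw [wval_perm φ hperm, wval_perm ψ hperm, wval_append, wval_append,
    wval_eq_wval_of_isCycle H hu, wval_eq_wval_of_isCycle H hv]
termination_by C.length
decreasing_by
  all_goals
    have := List.length_pos_iff.mpr hu.1
    have := List.length_pos_iff.mpr hv.1
    rw [hperm.length_eq, List.length_append]
    omega

theorem stmt_4 (φ ψ : A → kˣ) (𝒮 : Set (List (Letter A)))
    (h𝒮₁ : ∀ S ∈ 𝒮, IsSimpleCycle s t S)
    (h𝒮₂ : ∀ C, IsSimpleCycle s t C → ∃ S ∈ 𝒮, CycEquiv C S) :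
    (∀ S ∈ 𝒮, wval φ S = wval ψ S) ↔
      (∀ C, IsCycle s t C → wval φ C = wval ψ C) := by
  refine ⟨fun H C hC => wval_eq_wval_of_isCycle s t (fun C hC => ?_) hC,
    fun H S hS => H S (h𝒮₁ S hS).1⟩
  obtain ⟨S, hS, hCS⟩ := h𝒮₂ C hC
  exact hCS.wval_eq_wval_iff.mpr (H S hS)
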